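/- arXiv:2308.14926 — 3 statements merged into one kernel-verified Lean document; each statement's English description precedes it below -/
import Mathlib

section
/- Let V=(d,Q,Δ) be a VASS, ρ a path of length k, s_0(v_0)∈Q×ℕ^d, and m=mi(ρ,s_0,v_0). If the monus run induced by ρ from s_0(v_0) is s_0(v_0),…,s_{k-1}(v_{k-1}),s_k(v_k), then the classical run induced by ρ from s_0(v_0−m) exists and has the form s_0(v'_0),…,s_{k-1}(v'_{k-1}),s_k(v'_k) with v'_0=v_0−m and v'_k=v_k. -/
/-- A transition of a `d`-dimensional VASS over state set `Q`:
a source state, an update vector in `ℤ^d`, and a target state. -/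
abbrev VTrans (d : ℕ) (Q : Type*) := Q × (Fin d → ℤ) × Q

/-- A vector addition system with states (VASS), given by its set of transitions. -/
structure VASS (d : ℕ) (Q : Type*) where
  Δ : Set (VTrans d Q)

variable {d : ℕ} {Q : Type*}

/-- A sequence of transitions is a path if consecutive states match. -/
def IsPath (ρ : List (VTrans d Q)) : Prop := ρ.Chain' (fun t t' => t.2.2 = t'.1)

/-- A path of the VASS `V`. -/
def PathIn (V : VASS d Q) (ρ : List (VTrans d Q)) : Prop :=
  IsPath ρ ∧ ∀ t ∈ ρ, t ∈ V.Δ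

/-- The path starts at state `s` (any state works for the empty path). -/
def FromState (s : Q) (ρ : List (VTrans d Q)) : Prop :=
  match ρ with
  | [] => True
  | t :: _ => t.1 = s

/-- The last state of the run induced by `ρ` from state `s`. -/
def endState (s : Q) (ρ : List (VTrans d Q)) : Q := (ρ.map (fun t => t.2.2)).getLastD s

/-- Cast a vector over `ℕ` to a vector over `ℤ`. -/
def ofNatVec (v : Fin d → ℕ) : Fin d → ℤ := fun j => (v j : ℤ)

/-- The `i`-th vector of the ℤ-run induced by the path `ρ` from initial vector `v`. -/
def zrun (v : Fin d → ℤ) (ρ : List (VTrans d Q)) (i : ℕ) : Fin d → ℤ :=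
  v + ((ρ.take i).map (fun t => t.2.1)).sum

/-- The last vector of the ℤ-run induced by `ρ` from `v`. -/
def zend (v : Fin d → ℤ) (ρ : List (VTrans d Q)) : Fin d → ℤ := zrun v ρ ρ.length

/-- One step of the monus semantics: add `z` and truncate at `0` componentwise. -/
def mstep (v : Fin d → ℕ) (z : Fin d → ℤ) : Fin d → ℕ := fun j => ((v j : ℤ) + z j).toNat

/-- The `i`-th vector of the monus run induced by the path `ρ` from initial vector `v`. -/
def mrun (v : Fin d → ℕ) (ρ : List (VTrans d Q)) (i : ℕ) : Fin d → ℕ :=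
  (ρ.take i).foldl (fun u t => mstep u t.2.1) v

/-- The last vector of the monus run induced by `ρ` from `v`. -/
def mend (v : Fin d → ℕ) (ρ : List (VTrans d Q)) : Fin d → ℕ := mrun v ρ ρ.length

/-- The classical run induced by `ρ` from `v` exists: no value of the ℤ-run
drops below zero in any coordinate. -/
def ClassicalOK (v : Fin d → ℕ) (ρ : List (VTrans d Q)) : Prop :=
  ∀ i ≤ ρ.length, ∀ j, 0 ≤ zrun (ofNatVec v) ρ i j

/-- Classical reachability `s(v) →* t(w)`. -/
def ClassicalReach (V : VASS d Q) (s : Q) (v : Fin d → ℕ) (t : Q) (w : Fin d → ℕ) : Prop :=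
  ∃ ρ, PathIn V ρ ∧ FromState s ρ ∧ endState s ρ = t ∧ ClassicalOK v ρ ∧
    zend (ofNatVec v) ρ = ofNatVec w

/-- Reachability in ℤ-semantics `s(v) →ℤ* t(w)`. -/
def ZReach (V : VASS d Q) (s : Q) (v : Fin d → ℤ) (t : Q) (w : Fin d → ℤ) : Prop :=
  ∃ ρ, PathIn V ρ ∧ FromState s ρ ∧ endState s ρ = t ∧ zend v ρ = w

/-- Reachability in monus semantics `s(v) ⇝* t(w)`. -/
def MonusReach (V : VASS d Q) (s : Q) (v : Fin d → ℕ) (t : Q) (w : Fin d → ℕ) : Prop :=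
  ∃ ρ, PathIn V ρ ∧ FromState s ρ ∧ endState s ρ = t ∧ mend v ρ = w

/-- Coordinate `j` hits `0` in the ℤ-run (equivalently, classical run) induced
by `ρ` from `v` (at some index `1 ≤ i ≤ k`). -/
def HitsZeroZ (v : Fin d → ℤ) (ρ : List (VTrans d Q)) (j : Fin d) : Prop :=
  ∃ i, 1 ≤ i ∧ i ≤ ρ.length ∧ zrun v ρ i j = 0

/-- Coordinate `j` hits `0` in the monus run induced by `ρ` from `v`. -/
def HitsZeroM (v : Fin d → ℕ) (ρ : List (VTrans d Q)) (j : Fin d) : Prop :=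
  ∃ i, 1 ≤ i ∧ i ≤ ρ.length ∧ mrun v ρ i j = 0

/-- The monus run induced by `ρ` from `v` is lossy: at some step, for some
coordinate, the actual change differs from the transition's update. -/
def Lossy (v : Fin d → ℕ) (ρ : List (VTrans d Q)) : Prop :=
  ∃ (i : Fin ρ.length) (j : Fin d),
    (mrun v ρ ((i : ℕ) + 1) j : ℤ) ≠ (mrun v ρ (i : ℕ) j : ℤ) + (ρ.get i).2.1 j

/-- `mi ρ s₀ v₀`: the coordinatewise minimum (with `0`) of all values along
the ℤ-run induced by `ρ` from `v`. -/
def mi (v : Fin d → ℤ) (ρ : List (VTrans d Q)) : Fin d → ℤ :=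
  fun j => min 0 ((Finset.range (ρ.length + 1)).inf' Finset.nonempty_range_add_one
    (fun i => zrun v ρ i j))

/-- The reverse VASS: `(p,z,q)` is a transition iff `(q,-z,p)` is one of `V`. -/
def revV (V : VASS d Q) : VASS d Q := ⟨{tr | (tr.2.2, -tr.2.1, tr.1) ∈ V.Δ}⟩

/-- Coverability in monus semantics. -/
def MonusCover (V : VASS d Q) (s : Q) (v : Fin d → ℕ) (t : Q) (w : Fin d → ℕ) : Prop :=
  ∃ w', w ≤ w' ∧ MonusReach V s v t w'

/-- Coverability in classical semantics. -/
def ClassicalCover (V : VASS d Q) (s : Q) (v : Fin d → ℕ) (t : Q) (w : Fin d → ℕ) : Prop :=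
  ∃ w', w ≤ w' ∧ ClassicalReach V s v t w'

/-!
Along any sequence of transitions, the monus run is the ℤ-run minus its running minimum clamped
at `0`: a truncation at `0` raises the coordinate exactly by the amount the ℤ-run undercuts all
of its earlier values and `0`. Starting the ℤ-run from `v₀ - m` instead of `v₀` shifts it by the
overall minimum `-m`, which makes every value nonnegative and makes the final value agree with
the monus run's.
-/

lemma zrun_succ (v : Fin d → ℤ) {ρ : List (VTrans d Q)} {i : ℕ} (hi : i < ρ.length) :
    zrun v ρ (i + 1) = zrun v ρ i + ρ[i].2.1 := by
  rw [zrun, zrun, ← List.take_concat_get' ρ i hi, List.map_append, List.sum_append]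
  simp only [List.map_cons, List.map_nil, List.sum_singleton, add_assoc]

lemma mrun_succ (v : Fin d → ℕ) {ρ : List (VTrans d Q)} {i : ℕ} (hi : i < ρ.length) :
    mrun v ρ (i + 1) = mstep (mrun v ρ i) ρ[i].2.1 := by
  rw [mrun, mrun, ← List.take_concat_get' ρ i hi, List.foldl_concat]

lemma zrun_sub (v c : Fin d → ℤ) (ρ : List (VTrans d Q)) (i : ℕ) :
    zrun (v - c) ρ i = zrun v ρ i - c := by
  simp only [zrun]
  abel

lemma ofNatVec_nonneg (v : Fin d → ℕ) : 0 ≤ ofNatVec v :=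
  fun j => Int.natCast_nonneg (v j)

lemma ofNatVec_toNat {w : Fin d → ℤ} (hw : 0 ≤ w) : ofNatVec (fun j => (w j).toNat) = w :=
  funext fun j => Int.toNat_of_nonneg (hw j)

/-- `mi v ρ = runMin v ρ ρ.length` holds definitionally. -/
def runMin (v : Fin d → ℤ) (ρ : List (VTrans d Q)) (i : ℕ) : Fin d → ℤ :=
  fun j => min 0 ((Finset.range (i + 1)).inf' Finset.nonempty_range_add_one
    (fun l => zrun v ρ l j))

lemma runMin_succ (v : Fin d → ℤ) (ρ : List (VTrans d Q)) (i : ℕ) (j : Fin d) :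
    runMin v ρ (i + 1) j = min (runMin v ρ i j) (zrun v ρ (i + 1) j) := by
  simp only [runMin]
  rw [Finset.inf'_congr Finset.nonempty_range_add_one Finset.range_add_one (fun _ _ => rfl),
    Finset.inf'_insert (H := Finset.nonempty_range_add_one)]
  exact min_left_comm _ _ _ |>.trans (min_comm _ _)

lemma mrun_eq_zrun_sub_runMin (v : Fin d → ℕ) (ρ : List (VTrans d Q)) {i : ℕ}
    (hi : i ≤ ρ.length) :
    ofNatVec (mrun v ρ i) = zrun (ofNatVec v) ρ i - runMin (ofNatVec v) ρ i := by
  induction i with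
  | zero => funext j; simp [mrun, zrun, runMin, ofNatVec]
  | succ i ih =>
    funext j
    have hprev := congrFun (ih (by omega)) j
    have hz := congrFun (zrun_succ (ofNatVec v) (Nat.lt_of_succ_le hi)) j
    simp only [ofNatVec, Pi.sub_apply, Pi.add_apply] at hprev hz ⊢
    rw [mrun_succ v (Nat.lt_of_succ_le hi), mstep, Int.toNat_eq_max, runMin_succ, hprev, hz]
    omega

lemma mend_eq_zend_sub_mi (v : Fin d → ℕ) (ρ : List (VTrans d Q)) :
    ofNatVec (mend v ρ) = zend (ofNatVec v) ρ - mi (ofNatVec v) ρ :=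
  mrun_eq_zrun_sub_runMin v ρ le_rfl

lemma mi_nonpos (v : Fin d → ℤ) (ρ : List (VTrans d Q)) : mi v ρ ≤ 0 :=
  fun _ => min_le_left _ _

lemma mi_le_zrun (v : Fin d → ℤ) (ρ : List (VTrans d Q)) {i : ℕ} (hi : i ≤ ρ.length) :
    mi v ρ ≤ zrun v ρ i :=
  fun _ => (min_le_right _ _).trans
    (Finset.inf'_le _ (Finset.mem_range.mpr (Nat.lt_succ_of_le hi)))

theorem stmt6_general {d : ℕ} {Q : Type*} (ρ : List (VTrans d Q))
    (v₀ : Fin d → ℕ) :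
    ∃ v₀' : Fin d → ℕ, ofNatVec v₀' = ofNatVec v₀ - mi (ofNatVec v₀) ρ ∧
      ClassicalOK v₀' ρ ∧ zend (ofNatVec v₀') ρ = ofNatVec (mend v₀ ρ) := by
  have hstart : 0 ≤ ofNatVec v₀ - mi (ofNatVec v₀) ρ :=
    sub_nonneg.mpr ((mi_nonpos _ ρ).trans (ofNatVec_nonneg v₀))
  refine ⟨_, ofNatVec_toNat hstart, fun i hi j => ?_, ?_⟩
  · rw [ofNatVec_toNat hstart, zrun_sub]
    exact sub_nonneg.mpr (mi_le_zrun (ofNatVec v₀) ρ hi j)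
  · rw [ofNatVec_toNat hstart, mend_eq_zend_sub_mi, zend, zend, zrun_sub]

/-- (Proposition: relating monus and classical runs.) Let
`m = mi(ρ,s₀,v₀)`. If the monus run induced by `ρ` from `s₀(v₀)` ends in `v_k`, then
the classical run induced by `ρ` from `s₀(v₀ - m)` exists, starts at `v₀ - m`, and
ends in `v_k`. -/
theorem stmt6 {d : ℕ} {Q : Type*} (V : VASS d Q) (s₀ : Q) (ρ : List (VTrans d Q))
    (v₀ : Fin d → ℕ)
    (hpath : PathIn V ρ) (hfrom : FromState s₀ ρ) :
    ∃ v₀' : Fin d → ℕ, ofNatVec v₀' = ofNatVec v₀ - mi (ofNatVec v₀) ρ ∧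
      ClassicalOK v₀' ρ ∧ zend (ofNatVec v₀') ρ = ofNatVec (mend v₀ ρ) :=
  stmt6_general ρ v₀
end

section
/- Let V=(d,Q,Δ) be a VASS, let s(v) and t(w) be configurations in Q×ℕ^d, and let ρ be a path. Then the monus run induced by ρ from s(v) ends in t(w) if and only if there is a subset Z⊆{1,…,d} and a vector v'≥v such that: (1) the classical run induced by ρ from s(v') exists and ends in t(w); (2) every coordinate z∈Z hits 0 in this classical run; and (3) for every j∈{1,…,d}∖Z, v'[j]=v[j]. -/
variable {d : ℕ} {Q : Type*}

/-!
Along a path, the monus run differs from the ℤ-run from the same vector by exactly the depth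
`mi ≤ 0` to which the ℤ-run dips below `0` (the monus value is the ℤ-value minus
`min 0 (running minimum)`). Hence the classical run from `v - mi` ends where the monus run does,
and every coordinate with `mi < 0` hits `0` where that minimum is attained. Conversely, if the
classical run from `v' ≥ v` stays nonnegative and hits `0` in each coordinate where `v'` exceeds
`v`, then the ℤ-run from `v` has minimum exactly `v - v'`, so the monus run from `v` ends at the
end of the classical run from `v'`.
-/

section Runs

variable {u : Fin d → ℤ} {ρ : List (VTrans d Q)} {τ : VTrans d Q} {i : ℕ} {j : Fin d}

lemma zrun_sub_zrun (u u' : Fin d → ℤ) (ρ : List (VTrans d Q)) (i : ℕ) :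
    zrun u ρ i - zrun u' ρ i = u - u' := by
  simp [zrun]

lemma zrun_zero (u : Fin d → ℤ) (ρ : List (VTrans d Q)) : zrun u ρ 0 = u := by
  simp [zrun]

lemma zrun_append_of_le (σ : List (VTrans d Q)) (hi : i ≤ ρ.length) :
    zrun u (ρ ++ σ) i = zrun u ρ i := by
  simp [zrun, List.take_append_of_le_length hi]

lemma zend_append_singleton : zend u (ρ ++ [τ]) = zend u ρ + τ.2.1 := by
  simp [zend, zrun, add_assoc]

lemma mend_append_singleton (v : Fin d → ℕ) : mend v (ρ ++ [τ]) = mstep (mend v ρ) τ.2.1 := by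
  simp [mend, mrun, List.take_of_length_le]

lemma le_mi_iff {a : ℤ} : a ≤ mi u ρ j ↔ a ≤ 0 ∧ ∀ i ≤ ρ.length, a ≤ zrun u ρ i j := by
  simp [mi]

lemma mi_nonpos_s7 : mi u ρ j ≤ 0 := (le_mi_iff.1 le_rfl).1

lemma mi_le_zrun_s7 (hi : i ≤ ρ.length) : mi u ρ j ≤ zrun u ρ i j := (le_mi_iff.1 le_rfl).2 i hi

lemma mi_nil : mi u ([] : List (VTrans d Q)) j = min 0 (u j) := by
  simp [mi, zrun_zero]

lemma mi_append_singleton : mi u (ρ ++ [τ]) j = min (mi u ρ j) (zend u (ρ ++ [τ]) j) := by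
  have hend : zend u (ρ ++ [τ]) = zrun u (ρ ++ [τ]) (ρ.length + 1) := by simp [zend]
  refine eq_of_forall_le_iff fun a => ?_
  simp only [le_min_iff, le_mi_iff, List.length_append, List.length_singleton, hend]
  constructor
  · rintro ⟨h0, h⟩
    refine ⟨⟨h0, fun i hi => ?_⟩, h _ le_rfl⟩
    rw [← zrun_append_of_le [τ] hi]
    exact h i (by omega)
  · rintro ⟨⟨h0, h⟩, hlast⟩
    refine ⟨h0, fun i hi => ?_⟩
    rcases Nat.le_succ_iff.1 hi with hi | rfl
    · rw [zrun_append_of_le [τ] hi]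
      exact h i hi
    · exact hlast

lemma exists_zrun_eq_mi (h : mi u ρ j < 0) : ∃ i ≤ ρ.length, zrun u ρ i j = mi u ρ j := by
  obtain ⟨i, hi, hmin⟩ := Finset.exists_mem_eq_inf' Finset.nonempty_range_add_one
    (fun i => zrun u ρ i j)
  refine ⟨i, Nat.lt_succ_iff.1 (Finset.mem_range.1 hi), ?_⟩
  simp only [mi] at h ⊢
  omega

theorem coe_mend (v : Fin d → ℕ) (ρ : List (VTrans d Q)) (j : Fin d) :
    (mend v ρ j : ℤ) = zend (ofNatVec v) ρ j - mi (ofNatVec v) ρ j := by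
  induction ρ using List.reverseRecOn with
  | nil => simp [mend, mrun, zend, zrun_zero, mi_nil, ofNatVec]
  | append_singleton ρ τ ih =>
    have hle : mi (ofNatVec v) ρ j ≤ zend (ofNatVec v) ρ j := mi_le_zrun_s7 le_rfl
    simp only [mend_append_singleton, mstep, mi_append_singleton, zend_append_singleton,
      Pi.add_apply, ih]
    omega

end Runs

def classicalLift (v : Fin d → ℕ) (ρ : List (VTrans d Q)) : Fin d → ℕ :=
  fun j => v j + (-mi (ofNatVec v) ρ j).toNat

section ClassicalLift

variable (v : Fin d → ℕ) (ρ : List (VTrans d Q))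

lemma ofNatVec_classicalLift :
    ofNatVec (classicalLift v ρ) = ofNatVec v - mi (ofNatVec v) ρ := by
  funext j
  have := mi_nonpos_s7 (u := ofNatVec v) (ρ := ρ) (j := j)
  simp only [classicalLift, ofNatVec, Pi.sub_apply]
  omega

lemma zrun_classicalLift (i : ℕ) (j : Fin d) :
    zrun (ofNatVec (classicalLift v ρ)) ρ i j =
      zrun (ofNatVec v) ρ i j - mi (ofNatVec v) ρ j := by
  have hshift := congrFun (zrun_sub_zrun (ofNatVec (classicalLift v ρ)) (ofNatVec v) ρ i) j
  have hlift := congrFun (ofNatVec_classicalLift v ρ) j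
  simp only [Pi.sub_apply] at hshift hlift
  linarith

lemma classicalOK_classicalLift : ClassicalOK (classicalLift v ρ) ρ := fun i hi j => by
  rw [zrun_classicalLift]
  linarith [mi_le_zrun_s7 (u := ofNatVec v) (j := j) hi]

lemma zend_classicalLift : zend (ofNatVec (classicalLift v ρ)) ρ = ofNatVec (mend v ρ) := by
  funext j
  rw [zend, zrun_classicalLift, ofNatVec, coe_mend, zend]

lemma hitsZeroZ_classicalLift {j : Fin d} (h : mi (ofNatVec v) ρ j < 0) :
    HitsZeroZ (ofNatVec (classicalLift v ρ)) ρ j := by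
  obtain ⟨i, hi, hmin⟩ := exists_zrun_eq_mi h
  refine ⟨i, Nat.one_le_iff_ne_zero.2 ?_, hi, by rw [zrun_classicalLift, hmin, sub_self]⟩
  rintro rfl
  rw [zrun_zero, ofNatVec] at hmin
  omega

lemma classicalLift_apply_of_not_lt {j : Fin d} (h : ¬ mi (ofNatVec v) ρ j < 0) :
    classicalLift v ρ j = v j := by
  simp only [classicalLift, add_eq_left, Int.toNat_eq_zero]
  omega

end ClassicalLift

lemma mi_ofNatVec_eq_sub_of_classicalOK {v v' : Fin d → ℕ} {ρ : List (VTrans d Q)} {j : Fin d}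
    (hle : v ≤ v') (hok : ClassicalOK v' ρ) (hj : HitsZeroZ (ofNatVec v') ρ j ∨ v' j = v j) :
    mi (ofNatVec v) ρ j = v j - v' j := by
  have hshift : ∀ i, zrun (ofNatVec v) ρ i j = zrun (ofNatVec v') ρ i j - (v' j - v j) := by
    intro i
    have : zrun (ofNatVec v') ρ i j - zrun (ofNatVec v) ρ i j = v' j - v j :=
      congrFun (zrun_sub_zrun (ofNatVec v') (ofNatVec v) ρ i) j
    linarith
  refine le_antisymm ?_ (le_mi_iff.2 ⟨by have : v j ≤ v' j := hle j; omega, fun i hi => ?_⟩)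
  · rcases hj with ⟨i, -, hi, hzero⟩ | hfix
    · calc mi (ofNatVec v) ρ j ≤ zrun (ofNatVec v) ρ i j := mi_le_zrun_s7 hi
        _ = v j - v' j := by rw [hshift, hzero]; ring
    · rw [hfix, sub_self]
      exact mi_nonpos_s7
  · rw [hshift]
    linarith [hok i hi j]

lemma coe_mend_eq_zend_of_classicalOK {v v' : Fin d → ℕ} {ρ : List (VTrans d Q)} {j : Fin d}
    (hle : v ≤ v') (hok : ClassicalOK v' ρ) (hj : HitsZeroZ (ofNatVec v') ρ j ∨ v' j = v j) :
    (mend v ρ j : ℤ) = zend (ofNatVec v') ρ j := by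
  have hshift : zrun (ofNatVec v') ρ ρ.length j - zrun (ofNatVec v) ρ ρ.length j =
      v' j - v j := congrFun (zrun_sub_zrun (ofNatVec v') (ofNatVec v) ρ ρ.length) j
  rw [coe_mend, mi_ofNatVec_eq_sub_of_classicalOK hle hok hj, zend, zend]
  linarith

theorem stmt7_general {d : ℕ} {Q : Type*} (ρ : List (VTrans d Q))
    (v w : Fin d → ℕ) :
    mend v ρ = w ↔
    ∃ (Z : Set (Fin d)) (v' : Fin d → ℕ), v ≤ v' ∧
      ClassicalOK v' ρ ∧ zend (ofNatVec v') ρ = ofNatVec w ∧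
      (∀ z ∈ Z, HitsZeroZ (ofNatVec v') ρ z) ∧
      (∀ j ∉ Z, v' j = v j) := by
  constructor
  · rintro rfl
    exact ⟨{j | mi (ofNatVec v) ρ j < 0}, classicalLift v ρ, fun j => Nat.le_add_right _ _,
      classicalOK_classicalLift v ρ, zend_classicalLift v ρ,
      fun _ => hitsZeroZ_classicalLift v ρ, fun _ => classicalLift_apply_of_not_lt v ρ⟩
  · rintro ⟨Z, v', hle, hok, hend, hhits, hfix⟩
    funext j
    have hj := (em (j ∈ Z)).imp (hhits j) (hfix j)
    exact Nat.cast_injective (R := ℤ)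
      ((coe_mend_eq_zend_of_classicalOK hle hok hj).trans (congrFun hend j))

/-- (Characterization of monus reachability.) `s(v) ⇝ρ* t(w)` iff
there is `Z ⊆ {1,…,d}` and `v' ≥ v` such that (1) the classical run induced by `ρ`
from `s(v')` exists and ends in `t(w)`, (2) every coordinate in `Z` hits `0` in this
classical run, and (3) `v'[j] = v[j]` for every `j ∉ Z`. -/
theorem stmt7 {d : ℕ} {Q : Type*} (V : VASS d Q) (s t : Q) (ρ : List (VTrans d Q))
    (v w : Fin d → ℕ)
    (hpath : PathIn V ρ) (hfrom : FromState s ρ) (hend : endState s ρ = t) :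
    mend v ρ = w ↔
    ∃ (Z : Set (Fin d)) (v' : Fin d → ℕ), v ≤ v' ∧
      ClassicalOK v' ρ ∧ zend (ofNatVec v') ρ = ofNatVec w ∧
      (∀ z ∈ Z, HitsZeroZ (ofNatVec v') ρ z) ∧
      (∀ j ∉ Z, v' j = v j) :=
  stmt7_general ρ v w
end

section
/- Let V=(d,Q,T) be a VASS with states s,t∈Q, and let V'=(d+2,Q∪{t'},T') be constructed from V as follows, where t' is a fresh state: for z∈ℤ^d let Δ(z)=Σ_{j=1}^d z[j] and let extend(z)∈ℤ^{d+2} be (z,Δ(z),0) if Δ(z)≥0 and (z,0,−Δ(z)) otherwise; T' consists of (p,extend(z),q) for every (p,z,q)∈T, the transition (t,0,t'), and the loop (t',(0^d,−1,−1),t'). Then s(0^d,1,1)⇝*t'(0^d,1,1) in V' (monus semantics) if and only if s(0^d)→*t(0^d) in V (classical semantics). -/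
variable {d : ℕ} {Q : Type*}

/-- `Δ(z) = Σ_j z[j]`, the sum of all components. -/
def effSum {d : ℕ} (z : Fin d → ℤ) : ℤ := ∑ j, z j

/-- `extend(z) ∈ ℤ^{d+2}`: equals `(z, Δ(z), 0)` if `Δ(z) ≥ 0`,
and `(z, 0, -Δ(z))` otherwise. -/
def extendVec {d : ℕ} (z : Fin d → ℤ) : Fin (d + 2) → ℤ := fun j =>
  if h : (j : ℕ) < d then z ⟨j, h⟩
  else if (j : ℕ) = d then max (effSum z) 0
  else - min (effSum z) 0

/-- The VASS `V' = (d+2, Q ∪ {t'}, T')` with `T'` consisting of `(p, extend(z), q)`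
for every `(p,z,q) ∈ T`, the transition `(t, 0, t')`, and the count-down loop
`(t', (0^d, -1, -1), t')`. The fresh state `t'` is `Sum.inr ()`. -/
def ackVASS {d : ℕ} {Q : Type*} (V : VASS d Q) (t : Q) : VASS (d + 2) (Q ⊕ Unit) :=
  ⟨{tr | (∃ p z q, (p, z, q) ∈ V.Δ ∧ tr = (Sum.inl p, extendVec z, Sum.inl q)) ∨
         tr = (Sum.inl t, 0, Sum.inr ()) ∨
         tr = (Sum.inr (), (fun j : Fin (d + 2) => if (j : ℕ) < d then (0 : ℤ) else -1), Sum.inr ())}⟩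

/-- The vector `(v, 1, 1) ∈ ℕ^{d+2}`. -/
def padOneOne {d : ℕ} (v : Fin d → ℕ) : Fin (d + 2) → ℕ := fun j =>
  if h : (j : ℕ) < d then v ⟨j, h⟩ else 1

/-!
Along the image of a path `ρ` of `V`, the first `d` counters of `V'` follow the monus run of
`ρ`, while the two extra counters only grow, by the sums `P` and `N` of the positive and negative
parts of the `Δ(z)`; the count-down loop at `t'` lowers both by the same amount. So reaching
`t'(0^d,1,1)` means that the monus run of `ρ` ends at `0^d` and `P = N`. The ℤ-run lies
pointwise below the monus run and its final coordinate sum is `P - N = 0`, so it also ends at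
`0^d`. As truncation can only open a gap between the two runs that never closes again, equal
ends mean that no truncation happened: the run is classical. Conversely, a classical run from
`0^d` to `0^d` has `P = N` and is completed by `P` rounds of the loop.
-/

@[simp]
lemma ofNatVec_zero : ofNatVec (0 : Fin d → ℕ) = 0 := rfl

lemma ofNatVec_injective : Function.Injective (ofNatVec : (Fin d → ℕ) → Fin d → ℤ) :=
  fun _ _ h => funext fun j => Int.ofNat_inj.1 (congrFun h j)

lemma mstep_zero (v : Fin d → ℕ) : mstep v 0 = v := by
  funext j
  simp [mstep]

lemma le_ofNatVec_mstep (v : Fin d → ℕ) (z : Fin d → ℤ) :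
    ofNatVec v + z ≤ ofNatVec (mstep v z) :=
  fun _ => Int.self_le_toNat _

lemma ofNatVec_mstep_of_nonneg {v : Fin d → ℕ} {z : Fin d → ℤ} (h : 0 ≤ ofNatVec v + z) :
    ofNatVec (mstep v z) = ofNatVec v + z :=
  funext fun j => Int.toNat_of_nonneg (h j)

lemma mend_nil (v : Fin d → ℕ) : mend v ([] : List (VTrans d Q)) = v := rfl

lemma mend_eq_foldl (v : Fin d → ℕ) (ρ : List (VTrans d Q)) :
    mend v ρ = ρ.foldl (fun u t => mstep u t.2.1) v := by
  simp [mend, mrun]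

lemma mend_cons (v : Fin d → ℕ) (a : VTrans d Q) (l : List (VTrans d Q)) :
    mend v (a :: l) = mend (mstep v a.2.1) l := by
  simp [mend_eq_foldl]

lemma mend_append (v : Fin d → ℕ) (l₁ l₂ : List (VTrans d Q)) :
    mend v (l₁ ++ l₂) = mend (mend v l₁) l₂ := by
  simp only [mend_eq_foldl, List.foldl_append]

lemma zend_eq_add_sum (v : Fin d → ℤ) (ρ : List (VTrans d Q)) :
    zend v ρ = v + (ρ.map fun x => x.2.1).sum := by
  simp [zend, zrun]

lemma zend_cons (v : Fin d → ℤ) (a : VTrans d Q) (l : List (VTrans d Q)) :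
    zend v (a :: l) = zend (v + a.2.1) l := by
  simp [zend_eq_add_sum, add_assoc]

lemma zend_mono {v w : Fin d → ℤ} (h : v ≤ w) (ρ : List (VTrans d Q)) :
    zend v ρ ≤ zend w ρ := by
  simpa [zend_eq_add_sum] using h

lemma zrun_succ_cons (v : Fin d → ℤ) (a : VTrans d Q) (l : List (VTrans d Q)) (i : ℕ) :
    zrun v (a :: l) (i + 1) = zrun (v + a.2.1) l i := by
  simp [zrun, add_assoc]

lemma classicalOK_cons {v : Fin d → ℕ} {a : VTrans d Q} {l : List (VTrans d Q)} :
    ClassicalOK v (a :: l) ↔ 0 ≤ ofNatVec v + a.2.1 ∧ ClassicalOK (mstep v a.2.1) l := by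
  constructor
  · intro h
    have hstep : 0 ≤ ofNatVec v + a.2.1 := fun j => by
      simpa [zrun_succ_cons, zrun] using h 1 (by simp) j
    refine ⟨hstep, fun i hi j => ?_⟩
    rw [ofNatVec_mstep_of_nonneg hstep, ← zrun_succ_cons]
    exact h (i + 1) (by simpa using hi) j
  · rintro ⟨hstep, h⟩ (_ | i) hi j
    · simp [zrun, ofNatVec]
    · rw [zrun_succ_cons, ← ofNatVec_mstep_of_nonneg hstep]
      exact h i (by simpa using hi) j

lemma zend_le_mend (v : Fin d → ℕ) (ρ : List (VTrans d Q)) :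
    zend (ofNatVec v) ρ ≤ ofNatVec (mend v ρ) := by
  induction ρ generalizing v with
  | nil => exact le_rfl
  | cons a l ih =>
    rw [zend_cons, mend_cons]
    exact (zend_mono (le_ofNatVec_mstep v a.2.1) l).trans (ih _)

theorem classicalOK_iff_mend_eq_zend (v : Fin d → ℕ) (ρ : List (VTrans d Q)) :
    ClassicalOK v ρ ↔ ofNatVec (mend v ρ) = zend (ofNatVec v) ρ := by
  induction ρ generalizing v with
  | nil =>
    simp only [mend_nil, zend_eq_add_sum, List.map_nil, List.sum_nil, add_zero, iff_true]
    rintro i hi j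
    obtain rfl : i = 0 := by simpa using hi
    simp [zrun, ofNatVec]
  | cons a l ih =>
    rw [classicalOK_cons, ih, mend_cons, zend_cons]
    set u := mstep v a.2.1
    constructor
    · rintro ⟨hstep, h⟩
      rwa [← ofNatVec_mstep_of_nonneg hstep]
    · intro h
      have hle := zend_mono (le_ofNatVec_mstep v a.2.1) l
      have hu : zend (ofNatVec v + a.2.1) l = zend (ofNatVec u) l :=
        le_antisymm hle (h ▸ zend_le_mend u l)
      have hstep : ofNatVec u = ofNatVec v + a.2.1 := by
        simpa [zend_eq_add_sum] using hu.symm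
      exact ⟨hstep ▸ fun j => Int.natCast_nonneg _, hstep ▸ h⟩

lemma effSum_add (v w : Fin d → ℤ) : effSum (v + w) = effSum v + effSum w :=
  Finset.sum_add_distrib

lemma eq_zero_of_nonpos_of_effSum_eq_zero {v : Fin d → ℤ} (hle : v ≤ 0) (hsum : effSum v = 0) :
    v = 0 :=
  funext fun j => (Finset.sum_eq_zero_iff_of_nonpos fun i _ => hle i).1 hsum j (Finset.mem_univ j)

/-- `posEffect ρ` and `negEffect ρ` are what the counters `d` and `d + 1` of `ackVASS` gain
along the image of `ρ`. -/
def posEffect (ρ : List (VTrans d Q)) : ℕ := (ρ.map fun x => (effSum x.2.1).toNat).sum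

def negEffect (ρ : List (VTrans d Q)) : ℕ := (ρ.map fun x => (-effSum x.2.1).toNat).sum

lemma effSum_zend (v : Fin d → ℤ) (ρ : List (VTrans d Q)) :
    effSum (zend v ρ) = effSum v + posEffect ρ - negEffect ρ := by
  induction ρ generalizing v with
  | nil => simp [zend_eq_add_sum, posEffect, negEffect]
  | cons a l ih =>
    have h := Int.toNat_sub_toNat_neg (effSum a.2.1)
    simp only [zend_cons, ih, effSum_add, posEffect, negEffect, List.map_cons, List.sum_cons]
    push_cast
    linarith

theorem classicalOK_zero_and_zend_eq_zero_iff (ρ : List (VTrans d Q)) :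
    ClassicalOK 0 ρ ∧ zend 0 ρ = 0 ↔ mend 0 ρ = 0 ∧ posEffect ρ = negEffect ρ := by
  have hexact := classicalOK_iff_mend_eq_zend 0 ρ
  have heff := effSum_zend 0 ρ
  have heff0 : effSum (0 : Fin d → ℤ) = 0 := by simp [effSum]
  rw [ofNatVec_zero] at hexact
  constructor
  · rintro ⟨hok, hz⟩
    refine ⟨ofNatVec_injective ((hexact.1 hok).trans hz), ?_⟩
    rw [hz, heff0] at heff
    omega
  · rintro ⟨hm, hbal⟩
    have hle : zend 0 ρ ≤ 0 := by simpa [hm] using zend_le_mend 0 ρ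
    have hz := eq_zero_of_nonpos_of_effSum_eq_zero hle (by rw [heff, hbal, heff0]; ring)
    exact ⟨hexact.2 (by rw [hm, hz]; rfl), hz⟩

def withCounters (v : Fin d → ℕ) (a b : ℕ) : Fin (d + 2) → ℕ := fun j =>
  if h : (j : ℕ) < d then v ⟨j, h⟩ else if (j : ℕ) = d then a else b

lemma padOneOne_eq_withCounters (v : Fin d → ℕ) : padOneOne v = withCounters v 1 1 := by
  funext j
  unfold padOneOne withCounters
  split_ifs <;> rfl

lemma withCounters_inj {v w : Fin d → ℕ} {a b a' b' : ℕ} :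
    withCounters v a b = withCounters w a' b' ↔ v = w ∧ a = a' ∧ b = b' := by
  refine ⟨fun h => ⟨funext fun j => ?_, ?_, ?_⟩, by rintro ⟨rfl, rfl, rfl⟩; rfl⟩
  · simpa [withCounters] using congrFun h (Fin.castAdd 2 j)
  · simpa [withCounters] using congrFun h ⟨d, by omega⟩
  · simpa [withCounters] using congrFun h ⟨d + 1, by omega⟩

lemma mstep_withCounters_extendVec (v : Fin d → ℕ) (a b : ℕ) (z : Fin d → ℤ) :
    mstep (withCounters v a b) (extendVec z) =
      withCounters (mstep v z) (a + (effSum z).toNat) (b + (-effSum z).toNat) := by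
  funext j
  simp only [mstep, withCounters, extendVec]
  split_ifs <;> omega

def VASS.IsPathFrom (V : VASS d Q) : Q → List (VTrans d Q) → Prop
  | _, [] => True
  | p, a :: l => a ∈ V.Δ ∧ a.1 = p ∧ V.IsPathFrom a.2.2 l

lemma isPath_cons_cons {a b : VTrans d Q} {l : List (VTrans d Q)} :
    IsPath (a :: b :: l) ↔ a.2.2 = b.1 ∧ IsPath (b :: l) :=
  List.isChain_cons_cons

lemma VASS.isPathFrom_iff (V : VASS d Q) (p : Q) (ρ : List (VTrans d Q)) :
    V.IsPathFrom p ρ ↔ PathIn V ρ ∧ FromState p ρ := by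
  induction ρ generalizing p with
  | nil => exact iff_of_true trivial ⟨⟨List.isChain_nil, by simp⟩, trivial⟩
  | cons a l ih =>
    cases l with
    | nil =>
      have hsingle : IsPath [a] := List.isChain_singleton a
      simp [VASS.IsPathFrom, PathIn, FromState, and_comm, hsingle]
    | cons b l =>
      rw [VASS.IsPathFrom, ih]
      simp only [PathIn, isPath_cons_cons, FromState, List.forall_mem_cons]
      tauto

lemma endState_cons (p : Q) (a : VTrans d Q) (l : List (VTrans d Q)) :
    endState p (a :: l) = endState a.2.2 l := by
  rw [endState, List.map_cons, List.getLastD_cons, endState]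

lemma monusReach_iff (V : VASS d Q) (s : Q) (v : Fin d → ℕ) (t : Q) (w : Fin d → ℕ) :
    MonusReach V s v t w ↔ ∃ ρ, V.IsPathFrom s ρ ∧ endState s ρ = t ∧ mend v ρ = w := by
  simp only [MonusReach, VASS.isPathFrom_iff, and_assoc]

lemma classicalReach_iff (V : VASS d Q) (s : Q) (v : Fin d → ℕ) (t : Q) (w : Fin d → ℕ) :
    ClassicalReach V s v t w ↔ ∃ ρ, V.IsPathFrom s ρ ∧ endState s ρ = t ∧
      ClassicalOK v ρ ∧ zend (ofNatVec v) ρ = ofNatVec w := by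
  simp only [ClassicalReach, VASS.isPathFrom_iff, and_assoc]

namespace ackVASS

def liftTrans (x : VTrans d Q) : VTrans (d + 2) (Q ⊕ Unit) :=
  (Sum.inl x.1, extendVec x.2.1, Sum.inl x.2.2)

def bridge (t : Q) : VTrans (d + 2) (Q ⊕ Unit) := (Sum.inl t, 0, Sum.inr ())

def loop (d : ℕ) (Q : Type*) : VTrans (d + 2) (Q ⊕ Unit) :=
  (Sum.inr (), fun j : Fin (d + 2) => if (j : ℕ) < d then (0 : ℤ) else -1, Sum.inr ())

def path (t : Q) (ρ : List (VTrans d Q)) (m : ℕ) : List (VTrans (d + 2) (Q ⊕ Unit)) :=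
  ρ.map liftTrans ++ bridge t :: List.replicate m (loop d Q)

lemma mend_map_liftTrans (ρ : List (VTrans d Q)) (v : Fin d → ℕ) (a b : ℕ) :
    mend (withCounters v a b) (ρ.map liftTrans) =
      withCounters (mend v ρ) (a + posEffect ρ) (b + negEffect ρ) := by
  induction ρ generalizing v a b with
  | nil => rfl
  | cons x l ih =>
    simp only [List.map_cons, mend_cons, liftTrans, mstep_withCounters_extendVec, ih,
      posEffect, negEffect, List.sum_cons, add_assoc]

lemma mend_replicate_loop (m : ℕ) (v : Fin d → ℕ) (a b : ℕ) :
    mend (withCounters v a b) (List.replicate m (loop d Q)) = withCounters v (a - m) (b - m) := by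
  induction m generalizing a b with
  | zero => rfl
  | succ m ih =>
    have hstep : mstep (withCounters v a b) (loop d Q).2.1 = withCounters v (a - 1) (b - 1) := by
      funext j
      simp only [mstep, withCounters, loop]
      split_ifs <;> omega
    rw [List.replicate_succ, mend_cons, hstep, ih, Nat.sub_sub, Nat.sub_sub, Nat.add_comm 1]

lemma mend_path (t : Q) (ρ : List (VTrans d Q)) (m : ℕ) (v : Fin d → ℕ) (a b : ℕ) :
    mend (withCounters v a b) (path t ρ m) =
      withCounters (mend v ρ) (a + posEffect ρ - m) (b + negEffect ρ - m) := by
  rw [path, mend_append, mend_map_liftTrans, mend_cons, bridge, mstep_zero, mend_replicate_loop]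

variable {V : VASS d Q} {t : Q}

lemma mem_ackVASS_iff {a : VTrans (d + 2) (Q ⊕ Unit)} :
    a ∈ (ackVASS V t).Δ ↔ (∃ x ∈ V.Δ, a = liftTrans x) ∨ a = bridge t ∨ a = loop d Q := by
  simp only [ackVASS, Set.mem_ofPred_eq, liftTrans, bridge, loop, Prod.exists]

lemma isPathFrom_fresh_iff {l : List (VTrans (d + 2) (Q ⊕ Unit))} :
    (ackVASS V t).IsPathFrom (Sum.inr ()) l ↔ l = List.replicate l.length (loop d Q) := by
  induction l with
  | nil => simp [VASS.IsPathFrom]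
  | cons a l ih =>
    rw [VASS.IsPathFrom, mem_ackVASS_iff, List.length_cons, List.replicate_succ, List.cons.injEq]
    constructor
    · rintro ⟨⟨x, -, rfl⟩ | rfl | rfl, ha, hl⟩
      · cases ha
      · cases ha
      · exact ⟨rfl, ih.1 hl⟩
    · rintro ⟨rfl, hl⟩
      exact ⟨Or.inr (Or.inr rfl), rfl, ih.2 hl⟩

lemma endState_replicate_loop (m : ℕ) :
    endState (Sum.inr ()) (List.replicate m (loop d Q)) = Sum.inr () := by
  induction m with
  | zero => rfl
  | succ m ih => rwa [List.replicate_succ, endState_cons]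

/-- Once a path of `ackVASS V t` leaves `V`'s states through the bridge, it can only loop. -/
theorem isPathFrom_inl_to_fresh_iff {p : Q} {ρ' : List (VTrans (d + 2) (Q ⊕ Unit))} :
    (ackVASS V t).IsPathFrom (Sum.inl p) ρ' ∧ endState (Sum.inl p) ρ' = Sum.inr () ↔
      ∃ ρ m, V.IsPathFrom p ρ ∧ endState p ρ = t ∧ ρ' = path t ρ m := by
  constructor
  · induction ρ' generalizing p with
    | nil => rintro ⟨-, ⟨⟩⟩
    | cons a l ih =>
      rintro ⟨⟨ha, hsrc, hl⟩, hend⟩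
      rw [endState_cons] at hend
      rcases mem_ackVASS_iff.1 ha with ⟨x, hx, rfl⟩ | rfl | rfl
      · obtain ⟨ρ, m, hρ, hρt, rfl⟩ := ih (p := x.2.2) ⟨hl, hend⟩
        exact ⟨x :: ρ, m, ⟨hx, Sum.inl_injective hsrc, hρ⟩, by rwa [endState_cons], rfl⟩
      · exact ⟨[], l.length, trivial, (Sum.inl_injective hsrc).symm,
          congrArg _ (isPathFrom_fresh_iff.1 hl)⟩
      · cases hsrc
  · rintro ⟨ρ, m, hρ, hρt, rfl⟩
    induction ρ generalizing p with
    | nil =>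
      obtain rfl : p = t := hρt
      refine ⟨⟨mem_ackVASS_iff.2 (Or.inr (Or.inl rfl)), rfl, ?_⟩, ?_⟩
      · exact isPathFrom_fresh_iff.2 (by rw [List.length_replicate])
      · exact (endState_cons _ _ _).trans (endState_replicate_loop m)
    | cons x ρ ih =>
      obtain ⟨hx, rfl, hρ⟩ := hρ
      rw [endState_cons] at hρt
      obtain ⟨hpath, hend⟩ := ih hρ hρt
      exact ⟨⟨mem_ackVASS_iff.2 (Or.inl ⟨x, hx, rfl⟩), rfl, hpath⟩, by rwa [path, List.map_cons,
        List.cons_append, endState_cons]⟩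

end ackVASS

/-- `s(0^d,1,1) ⇝* t'(0^d,1,1)` in `V'` (monus semantics)
iff `s(0^d) →* t(0^d)` in `V` (classical semantics). -/
theorem stmt12 {d : ℕ} {Q : Type*} (V : VASS d Q) (s t : Q) :
    MonusReach (ackVASS V t) (Sum.inl s) (padOneOne 0) (Sum.inr ()) (padOneOne 0) ↔
    ClassicalReach V s 0 t 0 := by
  rw [monusReach_iff, classicalReach_iff, padOneOne_eq_withCounters]
  constructor
  · rintro ⟨ρ', hpath, hend, hmend⟩
    obtain ⟨ρ, m, hρ, hρt, rfl⟩ := ackVASS.isPathFrom_inl_to_fresh_iff.1 ⟨hpath, hend⟩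
    rw [ackVASS.mend_path, withCounters_inj] at hmend
    obtain ⟨hzero, hpos, hneg⟩ := hmend
    obtain ⟨hok, hz⟩ := (classicalOK_zero_and_zend_eq_zero_iff ρ).2 ⟨hzero, by omega⟩
    exact ⟨ρ, hρ, hρt, hok, by simpa using hz⟩
  · rintro ⟨ρ, hρ, hρt, hok, hz⟩
    obtain ⟨hzero, hbal⟩ := (classicalOK_zero_and_zend_eq_zero_iff ρ).1 ⟨hok, by simpa using hz⟩
    obtain ⟨hpath, hend⟩ := ackVASS.isPathFrom_inl_to_fresh_iff.2 ⟨ρ, posEffect ρ, hρ, hρt, rfl⟩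
    refine ⟨_, hpath, hend, ?_⟩
    rw [ackVASS.mend_path, hzero, hbal, Nat.add_sub_cancel]
end
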